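/- arXiv:2008.08470 — 6 statements merged into one kernel-verified Lean document; each statement's English description precedes it below -/
import Mathlib

section
/- For any matrix A ∈ ℝ^{M×N}, any matrices D_h, D_v ∈ ℝ^{N×N}, any vector g ∈ ℝ^M and any μ > 0, the isotropic ℓ⁰-gradient super-resolution functional Φ(u) = (1/2)‖Au − g‖² + μ‖(D_h u, D_v u)‖_{0,2} attains its minimum over ℝ^N, i.e. there exists u* ∈ ℝ^N with Φ(u*) ≤ Φ(u) for all u ∈ ℝ^N. -/
open Matrix Filter Topology

/-- Euclidean norm of a vector in `ℝ^n`. -/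
noncomputable def eucNorm {n : ℕ} (v : Fin n → ℝ) : ℝ :=
  Real.sqrt (∑ i, (v i) ^ 2)

/-- ℓ⁰ "norm": number of nonzero entries of a vector. -/
noncomputable def l0 {n : ℕ} (v : Fin n → ℝ) : ℕ :=
  (Finset.univ.filter fun i => v i ≠ 0).card

/-- Isotropic ℓ⁰ count: number of indices where the pair of entries is nonzero. -/
noncomputable def l02 {n : ℕ} (zh zv : Fin n → ℝ) : ℕ :=
  (Finset.univ.filter fun i => zh i ≠ 0 ∨ zv i ≠ 0).card

/-!
The ℓ⁰ term only depends on the support `S` of the gradient, and there are finitely many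
supports. For each `S`, the data term `‖Au - g‖` attains its minimum on the subspace of
images whose gradient is supported in `S` (a nearest point in a finite-dimensional subspace);
call the minimiser `u_S`. Its penalty is at most `μ |S|`, so the best of the finitely many
`u_S` beats every `u`: compare `u` with `u_S` for `S` the gradient support of `u`.
-/

theorem eucNorm_eq_norm_toLp {n : ℕ} (v : Fin n → ℝ) : eucNorm v = ‖WithLp.toLp 2 v‖ := by
  simp [eucNorm, EuclideanSpace.norm_eq]

theorem LinearMap.exists_mem_forall_norm_sub_le {E F : Type*} [AddCommGroup E] [Module ℝ E]
    [NormedAddCommGroup F] [NormedSpace ℝ F] [FiniteDimensional ℝ F]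
    (f : E →ₗ[ℝ] F) (V : Submodule ℝ E) (y : F) :
    ∃ u ∈ V, ∀ w ∈ V, ‖f u - y‖ ≤ ‖f w - y‖ := by
  obtain ⟨z, hz, hdist⟩ :=
    (V.map f).closed_of_finiteDimensional.exists_infDist_eq_dist ⟨0, zero_mem _⟩ y
  obtain ⟨u, hu, rfl⟩ := Submodule.mem_map.mp hz
  refine ⟨u, hu, fun w hw => ?_⟩
  rw [← dist_eq_norm, ← dist_eq_norm, dist_comm, ← hdist, dist_comm]
  exact Metric.infDist_le_dist_of_mem (Submodule.mem_map_of_mem hw)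

theorem exists_forall_add_mul_card_le {X ι : Type*} [Fintype ι] (q : X → ℝ)
    (supp : X → Finset ι) {μ : ℝ} (hμ : 0 ≤ μ)
    (hq : ∀ S, ∃ u, supp u ⊆ S ∧ ∀ w, supp w ⊆ S → q u ≤ q w) :
    ∃ ustar, ∀ u, q ustar + μ * (supp ustar).card ≤ q u + μ * (supp u).card := by
  classical
  choose minimizer hsupp hmin using hq
  obtain ⟨S₀, -, hS₀⟩ := Finset.exists_min_image Finset.univ
    (fun S => q (minimizer S) + μ * (supp (minimizer S)).card) ⟨∅, Finset.mem_univ _⟩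
  refine ⟨minimizer S₀, fun u => ?_⟩
  have hcard : ((supp (minimizer (supp u))).card : ℝ) ≤ (supp u).card := by
    exact_mod_cast Finset.card_le_card (hsupp (supp u))
  calc q (minimizer S₀) + μ * (supp (minimizer S₀)).card
      ≤ q (minimizer (supp u)) + μ * (supp (minimizer (supp u))).card :=
        hS₀ _ (Finset.mem_univ _)
    _ ≤ q u + μ * (supp u).card := by
        gcongr
        exact hmin _ u subset_rfl

section PairSupport

variable {ι E : Type*} [Fintype ι] [AddCommGroup E] [Module ℝ E]

noncomputable def pairSupport (zh zv : ι → ℝ) : Finset ι :=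
  Finset.univ.filter fun i => zh i ≠ 0 ∨ zv i ≠ 0

theorem l02_eq_card_pairSupport {n : ℕ} (zh zv : Fin n → ℝ) :
    l02 zh zv = (pairSupport zh zv).card :=
  rfl

def pairSupportedIn (Lh Lv : E →ₗ[ℝ] ι → ℝ) (S : Set ι) : Submodule ℝ E :=
  (Submodule.pi Sᶜ fun _ => ⊥).comap Lh ⊓ (Submodule.pi Sᶜ fun _ => ⊥).comap Lv

theorem mem_pairSupportedIn_iff {Lh Lv : E →ₗ[ℝ] ι → ℝ} {S : Finset ι} {u : E} :
    u ∈ pairSupportedIn Lh Lv S ↔ pairSupport (Lh u) (Lv u) ⊆ S := by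
  simp only [pairSupportedIn, pairSupport, Submodule.mem_inf, Submodule.mem_comap,
    Submodule.mem_pi, Set.mem_compl_iff, Finset.mem_coe, Submodule.mem_bot,
    Finset.subset_iff, Finset.mem_filter, Finset.mem_univ, true_and]
  grind

end PairSupport

/-- the isotropic ℓ⁰-gradient super-resolution functional attains
its minimum over ℝ^N. -/
theorem isotropic_l0_SR_existence (M N : ℕ) (A : Matrix (Fin M) (Fin N) ℝ)
    (Dh Dv : Matrix (Fin N) (Fin N) ℝ) (g : Fin M → ℝ) (μ : ℝ) (hμ : 0 < μ) :
    ∃ ustar : Fin N → ℝ, ∀ u : Fin N → ℝ,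
      1 / 2 * eucNorm (A.mulVec ustar - g) ^ 2
          + μ * (l02 (Dh.mulVec ustar) (Dv.mulVec ustar) : ℝ)
        ≤ 1 / 2 * eucNorm (A.mulVec u - g) ^ 2
          + μ * (l02 (Dh.mulVec u) (Dv.mulVec u) : ℝ) := by
  simp only [l02_eq_card_pairSupport]
  refine exists_forall_add_mul_card_le _ _ hμ.le fun S => ?_
  let toEuclidean := (WithLp.linearEquiv 2 ℝ (Fin M → ℝ)).symm.toLinearMap
  obtain ⟨u, hu, hmin⟩ := (toEuclidean ∘ₗ A.mulVecLin).exists_mem_forall_norm_sub_le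
    (pairSupportedIn Dh.mulVecLin Dv.mulVecLin S) (WithLp.toLp 2 g)
  refine ⟨u, mem_pairSupportedIn_iff.mp hu, fun w hw => ?_⟩
  have hnorm := hmin w (mem_pairSupportedIn_iff.mpr hw)
  simp only [eucNorm_eq_norm_toLp, WithLp.toLp_sub]
  gcongr
  exact hnorm
end

section
/- Assume the isotropic ADMM scheme, and assume in addition: (I.1) the sequence (β^k) is increasing and the series ∑_{k≥1} √(k/β^k) converges; (I.2) the stacked gradient operator u ↦ (D_h u, D_v u) from ℝ^N to ℝ^N × ℝ^N is injective (D has full rank). Then there exist z_h*, z_v*, u* ∈ ℝ^N with z_h^k → z_h*, z_v^k → z_v*, u^k → u*, and moreover z_h* = D_h u* and z_v* = D_v u*. -/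
open Matrix Filter Topology

/-!
Comparing the `z`-step with the point `D uᵏ + λᵏ/βᵏ` itself bounds the squared norm of its
residual by `2|μ|N/βᵏ`, since the ℓ⁰ term only takes values in `[0, N]`. Comparing the `u`-step
with `uᵏ` then gives a descent inequality for `½‖Au - g‖²` up to the additive constant `|μ|N`,
whence `‖λᵏ⁺¹/βᵏ‖² ≤ C (k + 1)/βᵏ` with `C = ‖Au⁰ - g‖² + 2|μ|N`. Both quantities are therefore
`O(√((k + 1)/βᵏ))`, which is summable by (I.1). They bound the increments of `D uᵏ`, which is
thus Cauchy, and, because `β` is increasing, the constraint residual `zᵏ - D uᵏ`, which thus tends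
to zero. Injectivity of `D` transfers the convergence of `D uᵏ` to `uᵏ`.
-/

/-- Euclidean norm of a vector in `ℝ^n`. -/
noncomputable def enorm' {n : ℕ} (v : Fin n → ℝ) : ℝ :=
  Real.sqrt (∑ i, (v i) ^ 2)

lemma le_sqrt_mul_sqrt_div_of_half_mul_sq_le {b x B t : ℝ} (hb : 0 < b) (hB : 0 ≤ B)
    (hx : 0 ≤ x) (h : b / 2 * x ^ 2 ≤ B * t) : x ≤ √(2 * B) * √(t / b) := by
  rw [← Real.sqrt_mul (by positivity), ← Real.sqrt_sq hx]
  refine Real.sqrt_le_sqrt ?_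
  rw [mul_div_assoc', le_div_iff₀ hb]
  linarith

lemma le_mul_succ_of_descent {a e : ℕ → ℝ} {K : ℝ} (ha : ∀ k, 0 ≤ a k) (he : ∀ k, 0 ≤ e k)
    (h : ∀ k, a (k + 1) + e k ≤ a k + K) (k : ℕ) : e k ≤ (a 0 + K) * (k + 1) := by
  have ha_le : ∀ n : ℕ, a n ≤ a 0 + K * n := by
    intro n
    induction n with
    | zero => simp
    | succ n ih => push_cast; linarith [h n, he n]
  have := ha_le k
  nlinarith [h k, ha (k + 1), ha 0, (k.cast_nonneg : (0 : ℝ) ≤ k)]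

lemma summable_sqrt_succ_div {β : ℕ → ℝ} (hβ : ∀ k, 0 ≤ β k)
    (h : Summable fun k : ℕ => √(k / β k)) : Summable fun k : ℕ => √((k + 1) / β k) := by
  rw [← summable_nat_add_iff 1]
  have h₁ : Summable fun k : ℕ => √2 * √((k + 1) / β (k + 1)) :=
    ((summable_nat_add_iff 1).mpr h).mul_left _ |>.congr fun k => by push_cast; rfl
  refine h₁.of_nonneg_of_le (fun _ => Real.sqrt_nonneg _) fun k => ?_
  rw [← Real.sqrt_mul zero_le_two, mul_div_assoc']
  gcongr
  · exact hβ _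
  · push_cast; linarith

lemma CauchySeq.of_comp_injective {𝕜 E F : Type*} [NontriviallyNormedField 𝕜] [CompleteSpace 𝕜]
    [NormedAddCommGroup E] [NormedSpace 𝕜 E] [FiniteDimensional 𝕜 E]
    [NormedAddCommGroup F] [NormedSpace 𝕜 F] {D : E →ₗ[𝕜] F} {u : ℕ → E}
    (hu : CauchySeq fun k => D (u k)) (hD : Function.Injective D) : CauchySeq u := by
  obtain ⟨K, -, hK⟩ := D.injective_iff_antilipschitz.mp hD
  have hDu := hK.isUniformInducing (LinearMap.toContinuousLinearMap D).uniformContinuous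
  exact hDu.cauchy_map_iff.mp (by rwa [Filter.map_map])

section ADMM

variable {E V : Type*} [NormedAddCommGroup E] [NormedSpace ℝ E]
  [NormedAddCommGroup V] [NormedSpace ℝ V]

/-- ADMM for `min f u + φ (D u)` through the splitting `z = D u`, with penalties `β` and
multipliers `l`. -/
structure IsADMMIterate (D : E →ₗ[ℝ] V) (f : E → ℝ) (φ : V → ℝ) (β : ℕ → ℝ)
    (z : ℕ → V) (u : ℕ → E) (l : ℕ → V) : Prop where
  z_step : ∀ k z', φ (z (k + 1)) + β k / 2 * ‖z (k + 1) - (D (u k) + (β k)⁻¹ • l k)‖ ^ 2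
    ≤ φ z' + β k / 2 * ‖z' - (D (u k) + (β k)⁻¹ • l k)‖ ^ 2
  u_step : ∀ k v, f (u (k + 1)) + β k / 2 * ‖D (u (k + 1)) - (z (k + 1) - (β k)⁻¹ • l k)‖ ^ 2
    ≤ f v + β k / 2 * ‖D v - (z (k + 1) - (β k)⁻¹ • l k)‖ ^ 2
  dual_update : ∀ k, l (k + 1) = l k - β k • (z (k + 1) - D (u (k + 1)))

namespace IsADMMIterate

variable {D : E →ₗ[ℝ] V} {f : E → ℝ} {φ : V → ℝ} {β : ℕ → ℝ} {z : ℕ → V} {u : ℕ → E}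
  {l : ℕ → V} {K : ℝ}

lemma inv_smul_dual_succ (h : IsADMMIterate D f φ β z u l) {k : ℕ} (hβ : β k ≠ 0) :
    (β k)⁻¹ • l (k + 1) = D (u (k + 1)) - (z (k + 1) - (β k)⁻¹ • l k) := by
  rw [h.dual_update, smul_sub, smul_smul, inv_mul_cancel₀ hβ, one_smul]
  abel

lemma sub_map_eq (h : IsADMMIterate D f φ β z u l) {k : ℕ} (hβ : β k ≠ 0) :
    z (k + 1) - D (u (k + 1)) = (β k)⁻¹ • l k - (β k)⁻¹ • l (k + 1) := by
  rw [h.inv_smul_dual_succ hβ]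
  abel

lemma map_succ_sub_map (h : IsADMMIterate D f φ β z u l) {k : ℕ} (hβ : β k ≠ 0) :
    D (u (k + 1)) - D (u k)
      = (β k)⁻¹ • l (k + 1) + (z (k + 1) - (D (u k) + (β k)⁻¹ • l k)) := by
  rw [h.inv_smul_dual_succ hβ]
  abel

lemma half_mul_sq_norm_z_step_le (h : IsADMMIterate D f φ β z u l)
    (hφ : ∀ x y, φ x - φ y ≤ K) (k : ℕ) :
    β k / 2 * ‖z (k + 1) - (D (u k) + (β k)⁻¹ • l k)‖ ^ 2 ≤ K := by
  have := h.z_step k (D (u k) + (β k)⁻¹ • l k)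
  rw [sub_self, norm_zero] at this
  linarith [hφ (D (u k) + (β k)⁻¹ • l k) (z (k + 1))]

lemma descent (h : IsADMMIterate D f φ β z u l) (hφ : ∀ x y, φ x - φ y ≤ K) {k : ℕ}
    (hβ : β k ≠ 0) :
    f (u (k + 1)) + β k / 2 * ‖(β k)⁻¹ • l (k + 1)‖ ^ 2 ≤ f (u k) + K := by
  have hu := h.u_step k (u k)
  have hflip : ‖D (u k) - (z (k + 1) - (β k)⁻¹ • l k)‖
      = ‖z (k + 1) - (D (u k) + (β k)⁻¹ • l k)‖ := by
    rw [← norm_neg]; congr 1; abel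
  rw [← h.inv_smul_dual_succ hβ, hflip] at hu
  linarith [h.half_mul_sq_norm_z_step_le hφ k]

lemma half_mul_sq_norm_dual_le (h : IsADMMIterate D f φ β z u l) (hf : ∀ x, 0 ≤ f x)
    (hφ : ∀ x y, φ x - φ y ≤ K) (hβ : ∀ k, 0 < β k) (k : ℕ) :
    β k / 2 * ‖(β k)⁻¹ • l (k + 1)‖ ^ 2 ≤ (f (u 0) + K) * (k + 1) :=
  le_mul_succ_of_descent (fun k => hf (u k)) (fun k => by have := hβ k; positivity)
    (fun k => h.descent hφ (hβ k).ne') k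

lemma norm_sub_map_le (h : IsADMMIterate D f φ β z u l) (hβ : ∀ k, 0 < β k)
    (hmono : Monotone β) (k : ℕ) :
    ‖z (k + 2) - D (u (k + 2))‖ ≤ ‖(β k)⁻¹ • l (k + 1)‖ + ‖(β (k + 1))⁻¹ • l (k + 2)‖ := by
  rw [h.sub_map_eq (hβ (k + 1)).ne']
  refine (norm_sub_le _ _).trans (add_le_add_left ?_ _)
  rw [norm_smul, norm_smul, Real.norm_of_nonneg (inv_pos.2 (hβ _)).le,
    Real.norm_of_nonneg (inv_pos.2 (hβ _)).le]
  gcongr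
  exacts [hβ k, hmono k.le_succ]

theorem exists_tendsto [FiniteDimensional ℝ E] (h : IsADMMIterate D f φ β z u l)
    (hD : Function.Injective D) (hf : ∀ x, 0 ≤ f x) (hφ : ∀ x y, φ x - φ y ≤ K)
    (hβ : ∀ k, 0 < β k) (hmono : Monotone β) (hsum : Summable fun k : ℕ => √(k / β k)) :
    ∃ u₀, Tendsto u atTop (𝓝 u₀) ∧ Tendsto z atTop (𝓝 (D u₀)) := by
  have hK : 0 ≤ K := by simpa using hφ (z 0) (z 0)
  have hB : 0 ≤ f (u 0) + K := add_nonneg (hf _) hK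
  set ρ : ℕ → ℝ := fun k => √(2 * (f (u 0) + K)) * √((k + 1) / β k)
  have hρ : Summable ρ := (summable_sqrt_succ_div (fun k => (hβ k).le) hsum).mul_left _
  have hdual (k : ℕ) : ‖(β k)⁻¹ • l (k + 1)‖ ≤ ρ k :=
    le_sqrt_mul_sqrt_div_of_half_mul_sq_le (hβ k) hB (norm_nonneg _)
      (h.half_mul_sq_norm_dual_le hf hφ hβ k)
  have hprimal (k : ℕ) : ‖z (k + 1) - (D (u k) + (β k)⁻¹ • l k)‖ ≤ ρ k := by
    refine le_sqrt_mul_sqrt_div_of_half_mul_sq_le (hβ k) hB (norm_nonneg _)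
      ((h.half_mul_sq_norm_z_step_le hφ k).trans ?_)
    nlinarith [hf (u 0), (k.cast_nonneg : (0 : ℝ) ≤ k)]
  have hcauchy : CauchySeq fun k => D (u k) := by
    refine cauchySeq_of_dist_le_of_summable (fun k => 2 * ρ k) (fun k => ?_) (hρ.mul_left 2)
    rw [dist_comm, dist_eq_norm, h.map_succ_sub_map (hβ k).ne']
    linarith [norm_add_le ((β k)⁻¹ • l (k + 1)) (z (k + 1) - (D (u k) + (β k)⁻¹ • l k)),
      hdual k, hprimal k]
  obtain ⟨u₀, hu⟩ := cauchySeq_tendsto_of_complete (hcauchy.of_comp_injective hD)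
  have hρ₀ : Tendsto (fun k => ρ k + ρ (k + 1)) atTop (𝓝 0) := by
    simpa using
      hρ.tendsto_atTop_zero.add ((tendsto_add_atTop_iff_nat 1).mpr hρ.tendsto_atTop_zero)
  have hres : Tendsto (fun k => z k - D (u k)) atTop (𝓝 0) := by
    rw [← tendsto_add_atTop_iff_nat 2, tendsto_zero_iff_norm_tendsto_zero]
    refine squeeze_zero (fun _ => norm_nonneg _) (fun k => ?_) hρ₀
    exact (h.norm_sub_map_le hβ hmono k).trans (add_le_add (hdual k) (hdual (k + 1)))
  refine ⟨u₀, hu, ?_⟩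
  simpa using hres.add ((D.continuous_of_finiteDimensional.tendsto u₀).comp hu)

end IsADMMIterate

end ADMM

lemma enorm'_eq_norm {n : ℕ} (v : Fin n → ℝ) :
    enorm' v = ‖(EuclideanSpace.equiv (Fin n) ℝ).symm v‖ := by
  simp [EuclideanSpace.norm_eq, enorm']

lemma l02_le {n : ℕ} (a b : Fin n → ℝ) : l02 a b ≤ n :=
  (Finset.card_filter_le _ _).trans (by simp)

lemma mul_l02_sub_mul_l02_le {n : ℕ} (μ : ℝ) (a b c d : Fin n → ℝ) :
    μ * l02 a b - μ * l02 c d ≤ |μ| * n := by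
  have hab : (l02 a b : ℝ) ≤ n := by exact_mod_cast l02_le a b
  have hcd : (l02 c d : ℝ) ≤ n := by exact_mod_cast l02_le c d
  rw [← mul_sub]
  refine (le_abs_self _).trans ?_
  rw [abs_mul]
  gcongr
  rw [abs_sub_le_iff]
  constructor <;> linarith [(l02 a b).cast_nonneg (α := ℝ), (l02 c d).cast_nonneg (α := ℝ)]

/-- In `ℓ²(ℝᴺ × ℝᴺ)` the two squared norms of each isotropic subproblem become a single one. -/
noncomputable def stackEquiv (n : ℕ) :
    ((Fin n → ℝ) × (Fin n → ℝ)) ≃L[ℝ]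
      WithLp 2 (EuclideanSpace ℝ (Fin n) × EuclideanSpace ℝ (Fin n)) :=
  ((EuclideanSpace.equiv (Fin n) ℝ).symm.prodCongr (EuclideanSpace.equiv (Fin n) ℝ).symm).trans
    (WithLp.prodContinuousLinearEquiv 2 ℝ _ _).symm

lemma norm_stackEquiv_sq {n : ℕ} (p : (Fin n → ℝ) × (Fin n → ℝ)) :
    ‖stackEquiv n p‖ ^ 2 = enorm' p.1 ^ 2 + enorm' p.2 ^ 2 := by
  rw [WithLp.prod_norm_sq_eq_of_L2, enorm'_eq_norm, enorm'_eq_norm]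
  rfl

noncomputable def stackedMulVec {n : ℕ} (Dh Dv : Matrix (Fin n) (Fin n) ℝ) :
    (Fin n → ℝ) →ₗ[ℝ] WithLp 2 (EuclideanSpace ℝ (Fin n) × EuclideanSpace ℝ (Fin n)) :=
  (stackEquiv n).toLinearMap ∘ₗ Dh.mulVecLin.prod Dv.mulVecLin

lemma stackedMulVec_apply {n : ℕ} (Dh Dv : Matrix (Fin n) (Fin n) ℝ) (x : Fin n → ℝ) :
    stackedMulVec Dh Dv x = stackEquiv n (Dh *ᵥ x, Dv *ᵥ x) :=
  rfl

theorem isotropic_ADMM_convergence_general (M N : ℕ) (A : Matrix (Fin M) (Fin N) ℝ)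
    (Dh Dv : Matrix (Fin N) (Fin N) ℝ) (g : Fin M → ℝ) (μ : ℝ)
    (zh zv u lh lv : ℕ → Fin N → ℝ) (β : ℕ → ℝ)
    (hβ : ∀ k, 0 < β k)
    -- (i): (z_h^{k+1}, z_v^{k+1}) minimizes the isotropic ℓ⁰ subproblem
    (hz : ∀ k, ∀ zh' zv' : Fin N → ℝ,
      μ * (l02 (zh (k + 1)) (zv (k + 1)) : ℝ)
          + β k / 2 * (enorm' (zh (k + 1) - (Dh.mulVec (u k) + (β k)⁻¹ • lh k)) ^ 2
            + enorm' (zv (k + 1) - (Dv.mulVec (u k) + (β k)⁻¹ • lv k)) ^ 2)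
        ≤ μ * (l02 zh' zv' : ℝ)
          + β k / 2 * (enorm' (zh' - (Dh.mulVec (u k) + (β k)⁻¹ • lh k)) ^ 2
            + enorm' (zv' - (Dv.mulVec (u k) + (β k)⁻¹ • lv k)) ^ 2))
    -- (ii): u^{k+1} minimizes the quadratic subproblem
    (hu : ∀ k, ∀ v : Fin N → ℝ,
      1 / 2 * enorm' (A.mulVec (u (k + 1)) - g) ^ 2
          + β k / 2 * (enorm' (Dh.mulVec (u (k + 1)) - (zh (k + 1) - (β k)⁻¹ • lh k)) ^ 2
            + enorm' (Dv.mulVec (u (k + 1)) - (zv (k + 1) - (β k)⁻¹ • lv k)) ^ 2)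
        ≤ 1 / 2 * enorm' (A.mulVec v - g) ^ 2
          + β k / 2 * (enorm' (Dh.mulVec v - (zh (k + 1) - (β k)⁻¹ • lh k)) ^ 2
            + enorm' (Dv.mulVec v - (zv (k + 1) - (β k)⁻¹ • lv k)) ^ 2))
    -- (iii): dual updates
    (hlh : ∀ k, lh (k + 1) = lh k - β k • (zh (k + 1) - Dh.mulVec (u (k + 1))))
    (hlv : ∀ k, lv (k + 1) = lv k - β k • (zv (k + 1) - Dv.mulVec (u (k + 1))))
    -- (I.1): increasing penalties and summability
    (hmono : Monotone β)
    (hsum : Summable fun k : ℕ => Real.sqrt ((k : ℝ) / β k))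
    -- (I.2): the stacked gradient operator is injective
    (hD : Function.Injective fun x : Fin N → ℝ => (Dh.mulVec x, Dv.mulVec x)) :
    ∃ zhstar zvstar ustar : Fin N → ℝ,
      Tendsto zh atTop (𝓝 zhstar) ∧ Tendsto zv atTop (𝓝 zvstar) ∧
      Tendsto u atTop (𝓝 ustar) ∧
      zhstar = Dh.mulVec ustar ∧ zvstar = Dv.mulVec ustar := by
  have hADMM : IsADMMIterate (stackedMulVec Dh Dv) (fun x => 1 / 2 * enorm' (A *ᵥ x - g) ^ 2)
      (fun w => μ * l02 ((stackEquiv N).symm w).1 ((stackEquiv N).symm w).2) β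
      (fun k => stackEquiv N (zh k, zv k)) u (fun k => stackEquiv N (lh k, lv k)) := by
    refine ⟨fun k w => ?_, fun k v => ?_, fun k => ?_⟩
    · obtain ⟨⟨a, b⟩, rfl⟩ := (stackEquiv N).surjective w
      simp only [stackedMulVec_apply, ← map_smul, ← map_add, ← map_sub, norm_stackEquiv_sq,
        ContinuousLinearEquiv.symm_apply_apply, Prod.smul_mk, Prod.mk_add_mk, Prod.mk_sub_mk]
      linarith [hz k a b]
    · simp only [stackedMulVec_apply, ← map_smul, ← map_sub, norm_stackEquiv_sq, Prod.smul_mk,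
        Prod.mk_sub_mk]
      linarith [hu k v]
    · simp only [stackedMulVec_apply, ← map_smul, ← map_sub, hlh, hlv, Prod.smul_mk,
        Prod.mk_sub_mk]
  obtain ⟨u₀, hu₀, hz₀⟩ :=
    hADMM.exists_tendsto (fun x y hxy => hD ((stackEquiv N).injective hxy))
      (fun x => by positivity) (fun w w' => mul_l02_sub_mul_l02_le μ _ _ _ _) hβ hmono hsum
  have hpair : Tendsto (fun k => (zh k, zv k)) atTop (𝓝 (Dh *ᵥ u₀, Dv *ᵥ u₀)) := by
    simpa [stackedMulVec_apply, Function.comp_def] using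
      ((stackEquiv N).symm.continuous.tendsto _).comp hz₀
  exact ⟨_, _, u₀, hpair.fst_nhds, hpair.snd_nhds, hu₀, rfl, rfl⟩

/-- convergence of the isotropic ADMM scheme under the growth
condition (I.1) and the full-rank condition (I.2). -/
theorem isotropic_ADMM_convergence (M N : ℕ) (A : Matrix (Fin M) (Fin N) ℝ)
    (Dh Dv : Matrix (Fin N) (Fin N) ℝ) (g : Fin M → ℝ) (μ : ℝ) (hμ : 0 < μ)
    (zh zv u lh lv : ℕ → Fin N → ℝ) (β : ℕ → ℝ)
    (hβ : ∀ k, 0 < β k)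
    -- (i): (z_h^{k+1}, z_v^{k+1}) minimizes the isotropic ℓ⁰ subproblem
    (hz : ∀ k, ∀ zh' zv' : Fin N → ℝ,
      μ * (l02 (zh (k + 1)) (zv (k + 1)) : ℝ)
          + β k / 2 * (enorm' (zh (k + 1) - (Dh.mulVec (u k) + (β k)⁻¹ • lh k)) ^ 2
            + enorm' (zv (k + 1) - (Dv.mulVec (u k) + (β k)⁻¹ • lv k)) ^ 2)
        ≤ μ * (l02 zh' zv' : ℝ)
          + β k / 2 * (enorm' (zh' - (Dh.mulVec (u k) + (β k)⁻¹ • lh k)) ^ 2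
            + enorm' (zv' - (Dv.mulVec (u k) + (β k)⁻¹ • lv k)) ^ 2))
    -- (ii): u^{k+1} minimizes the quadratic subproblem
    (hu : ∀ k, ∀ v : Fin N → ℝ,
      1 / 2 * enorm' (A.mulVec (u (k + 1)) - g) ^ 2
          + β k / 2 * (enorm' (Dh.mulVec (u (k + 1)) - (zh (k + 1) - (β k)⁻¹ • lh k)) ^ 2
            + enorm' (Dv.mulVec (u (k + 1)) - (zv (k + 1) - (β k)⁻¹ • lv k)) ^ 2)
        ≤ 1 / 2 * enorm' (A.mulVec v - g) ^ 2
          + β k / 2 * (enorm' (Dh.mulVec v - (zh (k + 1) - (β k)⁻¹ • lh k)) ^ 2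
            + enorm' (Dv.mulVec v - (zv (k + 1) - (β k)⁻¹ • lv k)) ^ 2))
    -- (iii): dual updates
    (hlh : ∀ k, lh (k + 1) = lh k - β k • (zh (k + 1) - Dh.mulVec (u (k + 1))))
    (hlv : ∀ k, lv (k + 1) = lv k - β k • (zv (k + 1) - Dv.mulVec (u (k + 1))))
    -- (I.1): increasing penalties and summability
    (hmono : Monotone β)
    (hsum : Summable fun k : ℕ => Real.sqrt ((k : ℝ) / β k))
    -- (I.2): the stacked gradient operator is injective
    (hD : Function.Injective fun x : Fin N → ℝ => (Dh.mulVec x, Dv.mulVec x)) :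
    ∃ zhstar zvstar ustar : Fin N → ℝ,
      Tendsto zh atTop (𝓝 zhstar) ∧ Tendsto zv atTop (𝓝 zvstar) ∧
      Tendsto u atTop (𝓝 ustar) ∧
      zhstar = Dh.mulVec ustar ∧ zvstar = Dv.mulVec ustar :=
  isotropic_ADMM_convergence_general M N A Dh Dv g μ zh zv u lh lv β hβ hz hu hlh hlv hmono hsum hD
end

section
/- Assume the anisotropic ADMM scheme. Then for every k ≥ 0, (1/2)‖Au^k − g‖² ≤ (1/2)‖Au^0 − g‖² + 2μNk. -/
open Matrix Filter Topology

/-- Euclidean norm of a vector in `ℝ^n`. -/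
noncomputable def enorm {n : ℕ} (v : Fin n → ℝ) : ℝ :=
  Real.sqrt (∑ i, (v i) ^ 2)

/-!
Comparing the ℓ⁰ subproblem at step `k` with the competitor `t = D_h u^k + λ_t^k/β_t^k` (the
centre of its quadratic term) bounds the attained quadratic term by `μ ‖·‖₀ ≤ μN`; likewise for
`s`. Comparing the `u` subproblem with the competitor `u = u^k` then shows that the fidelity
grows by at most these two quadratic terms, i.e. by at most `2μN`, per step.
-/

lemma enorm_eq_norm_toLp {n : ℕ} (v : Fin n → ℝ) :
    _root_.enorm v = ‖WithLp.toLp 2 v‖ := by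
  simp [_root_.enorm, EuclideanSpace.norm_eq]

lemma enorm_neg' {n : ℕ} (v : Fin n → ℝ) : _root_.enorm (-v) = _root_.enorm v := by
  simp only [enorm_eq_norm_toLp, WithLp.toLp_neg, norm_neg]

lemma l0_le {n : ℕ} (v : Fin n → ℝ) : l0 v ≤ n := by
  simpa [l0] using Finset.card_filter_le Finset.univ fun i => v i ≠ 0

lemma l0_prox_sq_dist_le {n : ℕ} {μ β : ℝ} (hμ : 0 ≤ μ) {c x : Fin n → ℝ}
    (hx : ∀ y : Fin n → ℝ,
      μ * (l0 x : ℝ) + β / 2 * _root_.enorm (x - c) ^ 2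
        ≤ μ * (l0 y : ℝ) + β / 2 * _root_.enorm (y - c) ^ 2) :
    β / 2 * _root_.enorm (x - c) ^ 2 ≤ μ * n := by
  have hc := hx c
  rw [sub_self, enorm_eq_norm_toLp (0 : Fin n → ℝ), WithLp.toLp_zero, norm_zero] at hc
  have hl0x : 0 ≤ μ * (l0 x : ℝ) := by positivity
  have hl0c : μ * (l0 c : ℝ) ≤ μ * n := by gcongr; exact_mod_cast l0_le c
  linarith

lemma anisotropic_ADMM_fidelity_succ_le {M N : ℕ} {A : Matrix (Fin M) (Fin N) ℝ}
    {Dh Dv : Matrix (Fin N) (Fin N) ℝ} {g : Fin M → ℝ} {μ : ℝ} (hμ : 0 ≤ μ)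
    {t₁ s₁ u₀ u₁ lt ls : Fin N → ℝ} {βt βs : ℝ} (hβt : 0 < βt) (hβs : 0 < βs)
    (ht : ∀ t' : Fin N → ℝ,
      μ * (l0 t₁ : ℝ) + βt / 2 * _root_.enorm (t₁ - (Dh *ᵥ u₀ + βt⁻¹ • lt)) ^ 2
        ≤ μ * (l0 t' : ℝ) + βt / 2 * _root_.enorm (t' - (Dh *ᵥ u₀ + βt⁻¹ • lt)) ^ 2)
    (hs : ∀ s' : Fin N → ℝ,
      μ * (l0 s₁ : ℝ) + βs / 2 * _root_.enorm (s₁ - (Dv *ᵥ u₀ + βs⁻¹ • ls)) ^ 2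
        ≤ μ * (l0 s' : ℝ) + βs / 2 * _root_.enorm (s' - (Dv *ᵥ u₀ + βs⁻¹ • ls)) ^ 2)
    (hu : ∀ v : Fin N → ℝ,
      1 / 2 * _root_.enorm (A *ᵥ u₁ - g) ^ 2
          + βt / 2 * _root_.enorm (Dh *ᵥ u₁ - (t₁ - βt⁻¹ • lt)) ^ 2
          + βs / 2 * _root_.enorm (Dv *ᵥ u₁ - (s₁ - βs⁻¹ • ls)) ^ 2
        ≤ 1 / 2 * _root_.enorm (A *ᵥ v - g) ^ 2
          + βt / 2 * _root_.enorm (Dh *ᵥ v - (t₁ - βt⁻¹ • lt)) ^ 2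
          + βs / 2 * _root_.enorm (Dv *ᵥ v - (s₁ - βs⁻¹ • ls)) ^ 2) :
    1 / 2 * _root_.enorm (A *ᵥ u₁ - g) ^ 2
      ≤ 1 / 2 * _root_.enorm (A *ᵥ u₀ - g) ^ 2 + 2 * μ * N := by
  have hEt := l0_prox_sq_dist_le hμ ht
  have hEs := l0_prox_sq_dist_le hμ hs
  have hu₀ := hu u₀
  have hct : Dh *ᵥ u₀ - (t₁ - βt⁻¹ • lt) = -(t₁ - (Dh *ᵥ u₀ + βt⁻¹ • lt)) := by abel
  have hcs : Dv *ᵥ u₀ - (s₁ - βs⁻¹ • ls) = -(s₁ - (Dv *ᵥ u₀ + βs⁻¹ • ls)) := by abel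
  rw [hct, hcs, enorm_neg', enorm_neg'] at hu₀
  have hPt : 0 ≤ βt / 2 * _root_.enorm (Dh *ᵥ u₁ - (t₁ - βt⁻¹ • lt)) ^ 2 := by positivity
  have hPs : 0 ≤ βs / 2 * _root_.enorm (Dv *ᵥ u₁ - (s₁ - βs⁻¹ • ls)) ^ 2 := by positivity
  linarith

theorem anisotropic_ADMM_fidelity_growth_general (M N : ℕ) (A : Matrix (Fin M) (Fin N) ℝ)
    (Dh Dv : Matrix (Fin N) (Fin N) ℝ) (g : Fin M → ℝ) (μ : ℝ) (hμ : 0 < μ)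
    (t s u lt ls : ℕ → Fin N → ℝ) (βt βs : ℕ → ℝ)
    (hβt : ∀ k, 0 < βt k) (hβs : ∀ k, 0 < βs k)
    -- (i): t^{k+1} minimizes the anisotropic ℓ⁰ subproblem
    (ht : ∀ k, ∀ t' : Fin N → ℝ,
      μ * (l0 (t (k + 1)) : ℝ)
          + βt k / 2 * _root_.enorm (t (k + 1) - (Dh.mulVec (u k) + (βt k)⁻¹ • lt k)) ^ 2
        ≤ μ * (l0 t' : ℝ)
          + βt k / 2 * _root_.enorm (t' - (Dh.mulVec (u k) + (βt k)⁻¹ • lt k)) ^ 2)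
    -- (ii): s^{k+1} minimizes the anisotropic ℓ⁰ subproblem
    (hs : ∀ k, ∀ s' : Fin N → ℝ,
      μ * (l0 (s (k + 1)) : ℝ)
          + βs k / 2 * _root_.enorm (s (k + 1) - (Dv.mulVec (u k) + (βs k)⁻¹ • ls k)) ^ 2
        ≤ μ * (l0 s' : ℝ)
          + βs k / 2 * _root_.enorm (s' - (Dv.mulVec (u k) + (βs k)⁻¹ • ls k)) ^ 2)
    -- (iii): u^{k+1} minimizes the quadratic subproblem
    (hu : ∀ k, ∀ v : Fin N → ℝ,
      1 / 2 * _root_.enorm (A.mulVec (u (k + 1)) - g) ^ 2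
          + βt k / 2 * _root_.enorm (Dh.mulVec (u (k + 1)) - (t (k + 1) - (βt k)⁻¹ • lt k)) ^ 2
          + βs k / 2 * _root_.enorm (Dv.mulVec (u (k + 1)) - (s (k + 1) - (βs k)⁻¹ • ls k)) ^ 2
        ≤ 1 / 2 * _root_.enorm (A.mulVec v - g) ^ 2
          + βt k / 2 * _root_.enorm (Dh.mulVec v - (t (k + 1) - (βt k)⁻¹ • lt k)) ^ 2
          + βs k / 2 * _root_.enorm (Dv.mulVec v - (s (k + 1) - (βs k)⁻¹ • ls k)) ^ 2)
    : ∀ k : ℕ,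
      1 / 2 * _root_.enorm (A.mulVec (u k) - g) ^ 2
        ≤ 1 / 2 * _root_.enorm (A.mulVec (u 0) - g) ^ 2 + 2 * μ * N * k := by
  intro k
  induction k with
  | zero => simp
  | succ k ih =>
    have hstep := anisotropic_ADMM_fidelity_succ_le hμ.le (hβt k) (hβs k) (ht k) (hs k) (hu k)
    push_cast
    linarith

/-- linear-in-k bound on the data fidelity along the anisotropic
ADMM iterates. -/
theorem anisotropic_ADMM_fidelity_growth (M N : ℕ) (A : Matrix (Fin M) (Fin N) ℝ)
    (Dh Dv : Matrix (Fin N) (Fin N) ℝ) (g : Fin M → ℝ) (μ : ℝ) (hμ : 0 < μ)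
    (t s u lt ls : ℕ → Fin N → ℝ) (βt βs : ℕ → ℝ)
    (hβt : ∀ k, 0 < βt k) (hβs : ∀ k, 0 < βs k)
    -- (i): t^{k+1} minimizes the anisotropic ℓ⁰ subproblem
    (ht : ∀ k, ∀ t' : Fin N → ℝ,
      μ * (l0 (t (k + 1)) : ℝ)
          + βt k / 2 * _root_.enorm (t (k + 1) - (Dh.mulVec (u k) + (βt k)⁻¹ • lt k)) ^ 2
        ≤ μ * (l0 t' : ℝ)
          + βt k / 2 * _root_.enorm (t' - (Dh.mulVec (u k) + (βt k)⁻¹ • lt k)) ^ 2)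
    -- (ii): s^{k+1} minimizes the anisotropic ℓ⁰ subproblem
    (hs : ∀ k, ∀ s' : Fin N → ℝ,
      μ * (l0 (s (k + 1)) : ℝ)
          + βs k / 2 * _root_.enorm (s (k + 1) - (Dv.mulVec (u k) + (βs k)⁻¹ • ls k)) ^ 2
        ≤ μ * (l0 s' : ℝ)
          + βs k / 2 * _root_.enorm (s' - (Dv.mulVec (u k) + (βs k)⁻¹ • ls k)) ^ 2)
    -- (iii): u^{k+1} minimizes the quadratic subproblem
    (hu : ∀ k, ∀ v : Fin N → ℝ,
      1 / 2 * _root_.enorm (A.mulVec (u (k + 1)) - g) ^ 2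
          + βt k / 2 * _root_.enorm (Dh.mulVec (u (k + 1)) - (t (k + 1) - (βt k)⁻¹ • lt k)) ^ 2
          + βs k / 2 * _root_.enorm (Dv.mulVec (u (k + 1)) - (s (k + 1) - (βs k)⁻¹ • ls k)) ^ 2
        ≤ 1 / 2 * _root_.enorm (A.mulVec v - g) ^ 2
          + βt k / 2 * _root_.enorm (Dh.mulVec v - (t (k + 1) - (βt k)⁻¹ • lt k)) ^ 2
          + βs k / 2 * _root_.enorm (Dv.mulVec v - (s (k + 1) - (βs k)⁻¹ • ls k)) ^ 2)
    -- (iv): dual updates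
    (hlt : ∀ k, lt (k + 1) = lt k - βt k • (t (k + 1) - Dh.mulVec (u (k + 1))))
    (hls : ∀ k, ls (k + 1) = ls k - βs k • (s (k + 1) - Dv.mulVec (u (k + 1))))
    : ∀ k : ℕ,
      1 / 2 * _root_.enorm (A.mulVec (u k) - g) ^ 2
        ≤ 1 / 2 * _root_.enorm (A.mulVec (u 0) - g) ^ 2 + 2 * μ * N * k :=
  anisotropic_ADMM_fidelity_growth_general M N A Dh Dv g μ hμ t s u lt ls βt βs hβt hβs ht hs hu
end

section
/- Assume the anisotropic ADMM scheme. Then for every k ≥ 0, ‖D_h u^{k+1} − t^{k+1} + λ_t^k/β_t^k‖ ≤ ‖Au^0 − g‖/√(β_t^k) + 2√(μN(k+1)/β_t^k), and the analogous bound holds with (s, λ_s, β_s, D_v) in place of (t, λ_t, β_t, D_h). -/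
open Matrix Filter Topology

/-- Euclidean norm of a vector in `ℝ^n`. -/
noncomputable def enorm2 {n : ℕ} (v : Fin n → ℝ) : ℝ :=
  Real.sqrt (∑ i, (v i) ^ 2)

/-!
Testing the `ℓ⁰`-subproblem at its own centre shows that `t^{k+1}` lies within
`√(2μN/β_t^k)` of `D_h u^k + λ_t^k/β_t^k`, since `μ‖·‖₀ ≤ μN`; likewise for `s^{k+1}`.
Testing the `u`-subproblem at `u^k` then gives
`½‖Au^{k+1} - g‖² + (β_t^k/2)‖r_t^k‖² + (β_s^k/2)‖r_s^k‖² ≤ ½‖Au^k - g‖² + 2μN`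
for the residuals `r^k`, so the data term grows by at most `2μN` per step and
`(β_t^k/2)‖r_t^k‖² ≤ ½‖Au^0 - g‖² + 2μN(k+1)`. Square roots and `√(a+b) ≤ √a + √b` finish.
-/

lemma enorm2_eq_norm {n : ℕ} (v : Fin n → ℝ) :
    enorm2 v = ‖(WithLp.toLp 2 v : EuclideanSpace ℝ (Fin n))‖ := by
  simp [enorm2, EuclideanSpace.norm_eq]

lemma enorm2_nonneg {n : ℕ} (v : Fin n → ℝ) : 0 ≤ enorm2 v := Real.sqrt_nonneg _

lemma enorm2_zero {n : ℕ} : enorm2 (0 : Fin n → ℝ) = 0 := by simp [enorm2]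

lemma enorm2_sub_comm {n : ℕ} (x y : Fin n → ℝ) : enorm2 (x - y) = enorm2 (y - x) := by
  simp only [enorm2_eq_norm, WithLp.toLp_sub]
  exact norm_sub_rev _ _

lemma enorm2_sub_sub {n : ℕ} (x y z : Fin n → ℝ) :
    enorm2 (x - (y - z)) = enorm2 (y - (x + z)) := by
  rw [sub_sub_eq_add_sub, enorm2_sub_comm]

lemma sq_dist_le_of_isMin_l0_prox {n : ℕ} {μ β : ℝ} {x c : Fin n → ℝ} (hμ : 0 ≤ μ)
    (hx : ∀ y, μ * l0 x + β / 2 * enorm2 (x - c) ^ 2 ≤ μ * l0 y + β / 2 * enorm2 (y - c) ^ 2) :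
    β / 2 * enorm2 (x - c) ^ 2 ≤ μ * n := by
  have hc := hx c
  rw [sub_self, enorm2_zero] at hc
  have hl0c : μ * l0 c ≤ μ * n := mul_le_mul_of_nonneg_left (by exact_mod_cast l0_le c) hμ
  have hl0x : 0 ≤ μ * l0 x := by positivity
  linarith

lemma le_add_mul_succ_of_descent {E a : ℕ → ℝ} {C : ℝ} (hE : ∀ k, 0 ≤ E k)
    (ha : ∀ k, 0 ≤ a k) (h : ∀ k, E (k + 1) + a k ≤ E k + C) (k : ℕ) :
    a k ≤ E 0 + C * (k + 1) := by
  have hEk : ∀ j : ℕ, E j ≤ E 0 + C * j := by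
    intro j
    induction j with
    | zero => simp
    | succ j ih => push_cast; linarith [h j, ha j]
  linarith [h k, hE (k + 1), hEk k]

lemma le_div_sqrt_add_two_mul_sqrt {β R W c : ℝ} (hβ : 0 < β) (hW : 0 ≤ W) (hc : 0 ≤ c)
    (h : β * R ^ 2 ≤ W ^ 2 + 4 * c) : R ≤ W / √β + 2 * √(c / β) := by
  have hW2 : (W / √β) ^ 2 = W ^ 2 / β := by rw [div_pow, Real.sq_sqrt hβ.le]
  have hc2 : (2 * √(c / β)) ^ 2 = 4 * c / β := by
    rw [mul_pow, Real.sq_sqrt (by positivity)]; ring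
  have hcross : 0 ≤ W / √β * (2 * √(c / β)) := by positivity
  have hR : R ^ 2 ≤ W ^ 2 / β + 4 * c / β := by
    rw [← add_div, le_div_iff₀ hβ]; linarith
  refine (le_abs_self R).trans (abs_le_of_sq_le_sq ?_ (by positivity))
  nlinarith [add_sq (W / √β) (2 * √(c / β))]

theorem anisotropic_ADMM_residual_bound_general (M N : ℕ) (A : Matrix (Fin M) (Fin N) ℝ)
    (Dh Dv : Matrix (Fin N) (Fin N) ℝ) (g : Fin M → ℝ) (μ : ℝ) (hμ : 0 < μ)
    (t s u lt ls : ℕ → Fin N → ℝ) (βt βs : ℕ → ℝ)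
    (hβt : ∀ k, 0 < βt k) (hβs : ∀ k, 0 < βs k)
    -- (i): t^{k+1} minimizes the anisotropic ℓ⁰ subproblem
    (ht : ∀ k, ∀ t' : Fin N → ℝ,
      μ * (l0 (t (k + 1)) : ℝ)
          + βt k / 2 * enorm2 (t (k + 1) - (Dh.mulVec (u k) + (βt k)⁻¹ • lt k)) ^ 2
        ≤ μ * (l0 t' : ℝ)
          + βt k / 2 * enorm2 (t' - (Dh.mulVec (u k) + (βt k)⁻¹ • lt k)) ^ 2)
    -- (ii): s^{k+1} minimizes the anisotropic ℓ⁰ subproblem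
    (hs : ∀ k, ∀ s' : Fin N → ℝ,
      μ * (l0 (s (k + 1)) : ℝ)
          + βs k / 2 * enorm2 (s (k + 1) - (Dv.mulVec (u k) + (βs k)⁻¹ • ls k)) ^ 2
        ≤ μ * (l0 s' : ℝ)
          + βs k / 2 * enorm2 (s' - (Dv.mulVec (u k) + (βs k)⁻¹ • ls k)) ^ 2)
    -- (iii): u^{k+1} minimizes the quadratic subproblem
    (hu : ∀ k, ∀ v : Fin N → ℝ,
      1 / 2 * enorm2 (A.mulVec (u (k + 1)) - g) ^ 2
          + βt k / 2 * enorm2 (Dh.mulVec (u (k + 1)) - (t (k + 1) - (βt k)⁻¹ • lt k)) ^ 2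
          + βs k / 2 * enorm2 (Dv.mulVec (u (k + 1)) - (s (k + 1) - (βs k)⁻¹ • ls k)) ^ 2
        ≤ 1 / 2 * enorm2 (A.mulVec v - g) ^ 2
          + βt k / 2 * enorm2 (Dh.mulVec v - (t (k + 1) - (βt k)⁻¹ • lt k)) ^ 2
          + βs k / 2 * enorm2 (Dv.mulVec v - (s (k + 1) - (βs k)⁻¹ • ls k)) ^ 2)
    : ∀ k : ℕ,
      enorm2 (Dh.mulVec (u (k + 1)) - t (k + 1) + (βt k)⁻¹ • lt k)
          ≤ enorm2 (A.mulVec (u 0) - g) / Real.sqrt (βt k)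
            + 2 * Real.sqrt (μ * N * (k + 1) / βt k) ∧
      enorm2 (Dv.mulVec (u (k + 1)) - s (k + 1) + (βs k)⁻¹ • ls k)
          ≤ enorm2 (A.mulVec (u 0) - g) / Real.sqrt (βs k)
            + 2 * Real.sqrt (μ * N * (k + 1) / βs k) := by
  intro k
  set E : ℕ → ℝ := fun j => 1 / 2 * enorm2 (A *ᵥ u j - g) ^ 2
  set rT : ℕ → ℝ := fun j => enorm2 (Dh *ᵥ u (j + 1) - (t (j + 1) - (βt j)⁻¹ • lt j))
  set rS : ℕ → ℝ := fun j => enorm2 (Dv *ᵥ u (j + 1) - (s (j + 1) - (βs j)⁻¹ • ls j))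
  have hdescent : ∀ j, E (j + 1) + (βt j / 2 * rT j ^ 2 + βs j / 2 * rS j ^ 2)
      ≤ E j + 2 * (μ * N) := by
    intro j
    simp only [E, rT, rS]
    have hstep := hu j (u j)
    rw [enorm2_sub_sub (Dh *ᵥ u j), enorm2_sub_sub (Dv *ᵥ u j)] at hstep
    linarith [sq_dist_le_of_isMin_l0_prox hμ.le (ht j), sq_dist_le_of_isMin_l0_prox hμ.le (hs j)]
  have hbound := le_add_mul_succ_of_descent (fun j => by positivity)
    (fun j => by have := hβt j; have := hβs j; positivity) hdescent k
  have hT := mul_nonneg (hβt k).le (sq_nonneg (rT k))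
  have hS := mul_nonneg (hβs k).le (sq_nonneg (rS k))
  simp only [E, rT, rS] at hbound hT hS
  rw [sub_add, sub_add]
  constructor
  · exact le_div_sqrt_add_two_mul_sqrt (hβt k) (enorm2_nonneg _) (by positivity) (by linarith)
  · exact le_div_sqrt_add_two_mul_sqrt (hβs k) (enorm2_nonneg _) (by positivity) (by linarith)

/-- bound on the residuals of the anisotropic ADMM scheme. -/
theorem anisotropic_ADMM_residual_bound (M N : ℕ) (A : Matrix (Fin M) (Fin N) ℝ)
    (Dh Dv : Matrix (Fin N) (Fin N) ℝ) (g : Fin M → ℝ) (μ : ℝ) (hμ : 0 < μ)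
    (t s u lt ls : ℕ → Fin N → ℝ) (βt βs : ℕ → ℝ)
    (hβt : ∀ k, 0 < βt k) (hβs : ∀ k, 0 < βs k)
    -- (i): t^{k+1} minimizes the anisotropic ℓ⁰ subproblem
    (ht : ∀ k, ∀ t' : Fin N → ℝ,
      μ * (l0 (t (k + 1)) : ℝ)
          + βt k / 2 * enorm2 (t (k + 1) - (Dh.mulVec (u k) + (βt k)⁻¹ • lt k)) ^ 2
        ≤ μ * (l0 t' : ℝ)
          + βt k / 2 * enorm2 (t' - (Dh.mulVec (u k) + (βt k)⁻¹ • lt k)) ^ 2)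
    -- (ii): s^{k+1} minimizes the anisotropic ℓ⁰ subproblem
    (hs : ∀ k, ∀ s' : Fin N → ℝ,
      μ * (l0 (s (k + 1)) : ℝ)
          + βs k / 2 * enorm2 (s (k + 1) - (Dv.mulVec (u k) + (βs k)⁻¹ • ls k)) ^ 2
        ≤ μ * (l0 s' : ℝ)
          + βs k / 2 * enorm2 (s' - (Dv.mulVec (u k) + (βs k)⁻¹ • ls k)) ^ 2)
    -- (iii): u^{k+1} minimizes the quadratic subproblem
    (hu : ∀ k, ∀ v : Fin N → ℝ,
      1 / 2 * enorm2 (A.mulVec (u (k + 1)) - g) ^ 2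
          + βt k / 2 * enorm2 (Dh.mulVec (u (k + 1)) - (t (k + 1) - (βt k)⁻¹ • lt k)) ^ 2
          + βs k / 2 * enorm2 (Dv.mulVec (u (k + 1)) - (s (k + 1) - (βs k)⁻¹ • ls k)) ^ 2
        ≤ 1 / 2 * enorm2 (A.mulVec v - g) ^ 2
          + βt k / 2 * enorm2 (Dh.mulVec v - (t (k + 1) - (βt k)⁻¹ • lt k)) ^ 2
          + βs k / 2 * enorm2 (Dv.mulVec v - (s (k + 1) - (βs k)⁻¹ • ls k)) ^ 2)
    -- (iv): dual updates
    (hlt : ∀ k, lt (k + 1) = lt k - βt k • (t (k + 1) - Dh.mulVec (u (k + 1))))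
    (hls : ∀ k, ls (k + 1) = ls k - βs k • (s (k + 1) - Dv.mulVec (u (k + 1))))
    : ∀ k : ℕ,
      enorm2 (Dh.mulVec (u (k + 1)) - t (k + 1) + (βt k)⁻¹ • lt k)
          ≤ enorm2 (A.mulVec (u 0) - g) / Real.sqrt (βt k)
            + 2 * Real.sqrt (μ * N * (k + 1) / βt k) ∧
      enorm2 (Dv.mulVec (u (k + 1)) - s (k + 1) + (βs k)⁻¹ • ls k)
          ≤ enorm2 (A.mulVec (u 0) - g) / Real.sqrt (βs k)
            + 2 * Real.sqrt (μ * N * (k + 1) / βs k) :=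
  anisotropic_ADMM_residual_bound_general M N A Dh Dv g μ hμ t s u lt ls βt βs hβt hβs ht hs hu
end

section
/- Assume the anisotropic ADMM scheme, and assume in addition that the sequences (β_t^k) and (β_s^k) are increasing and that the series ∑_{k≥1} √(k/β_t^k) and ∑_{k≥1} √(k/β_s^k) converge. Then the sequence (D_h u^k)_k is a Cauchy sequence in ℝ^N, hence converges; similarly (D_v u^k)_k converges. -/
open Matrix Filter Topology

/-!
Testing each ℓ⁰ proximal step against the point it approximates, `D_h u^k + λ_t^k/β_t^k`, whose
penalty is at most `μN`, bounds its residual `r_t^k = t^{k+1} - (D_h u^k + λ_t^k/β_t^k)` by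
`β_t^k ‖r_t^k‖² ≤ 2μN` (likewise for `s`). Testing the `u`-step against `u^k` then gives
`‖Au^{k+1} - g‖² + β_t^k ‖ρ_t^k‖² + β_s^k ‖ρ_s^k‖² ≤ ‖Au^k - g‖² + 4μN` for the `u`-step residuals
`ρ_t^k = D_h u^{k+1} - (t^{k+1} - λ_t^k/β_t^k)` and `ρ_s^k`, so the data term grows at most
linearly and `β^k ‖ρ^k‖² = O(k)`. As `D_h u^{k+1} - D_h u^k = ρ_t^k + r_t^k`, the increments are
`O(√(k/β_t^k))`, which is summable.
-/

namespace ADMM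

lemma enorm_eq_norm {n : ℕ} (v : Fin n → ℝ) : _root_.enorm v = ‖WithLp.toLp 2 v‖ := by
  simp only [_root_.enorm, EuclideanSpace.norm_eq, Real.norm_eq_abs, sq_abs]

lemma enorm_zero {n : ℕ} : _root_.enorm (0 : Fin n → ℝ) = 0 := by
  simp [enorm_eq_norm]

lemma enorm_neg {n : ℕ} (v : Fin n → ℝ) : _root_.enorm (-v) = _root_.enorm v := by
  rw [enorm_eq_norm, enorm_eq_norm, WithLp.toLp_neg, norm_neg]

lemma enorm_sub_le {n : ℕ} (a b c : Fin n → ℝ) :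
    _root_.enorm (a - c) ≤ _root_.enorm (a - b) + _root_.enorm (b - c) := by
  simp only [enorm_eq_norm, WithLp.toLp_sub]
  exact norm_sub_le_norm_sub_add_norm_sub _ _ _

lemma enorm_sub_sq_le {n : ℕ} (a b c : Fin n → ℝ) :
    _root_.enorm (a - c) ^ 2 ≤ 2 * _root_.enorm (a - b) ^ 2 + 2 * _root_.enorm (b - c) ^ 2 := by
  have h0 : 0 ≤ _root_.enorm (a - c) := Real.sqrt_nonneg _
  nlinarith [enorm_sub_le a b c, sq_nonneg (_root_.enorm (a - b) - _root_.enorm (b - c))]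

lemma dist_le_enorm_sub {n : ℕ} (a b : Fin n → ℝ) : dist a b ≤ _root_.enorm (a - b) := by
  refine (dist_pi_le_iff (Real.sqrt_nonneg _)).2 fun i => ?_
  rw [Real.dist_eq, ← Real.sqrt_sq_eq_abs]
  exact Real.sqrt_le_sqrt <|
    Finset.single_le_sum (fun j _ => sq_nonneg ((a - b) j)) (Finset.mem_univ i)

lemma enorm_sub_sub_comm {n : ℕ} (a b c : Fin n → ℝ) :
    _root_.enorm (a - (b - c)) = _root_.enorm (b - (a + c)) := by
  rw [← enorm_neg]
  congr 1
  abel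

lemma l0_le {n : ℕ} (v : Fin n → ℝ) : l0 v ≤ n :=
  (Finset.card_filter_le _ _).trans (Finset.card_fin n).le

lemma mul_enorm_sub_sq_le_of_prox {n : ℕ} {φ : (Fin n → ℝ) → ℝ} {β : ℝ} {x y : Fin n → ℝ}
    (hx : ∀ x', φ x + β / 2 * _root_.enorm (x - y) ^ 2
      ≤ φ x' + β / 2 * _root_.enorm (x' - y) ^ 2) :
    β * _root_.enorm (x - y) ^ 2 ≤ 2 * (φ y - φ x) := by
  have := hx y
  rw [sub_self, enorm_zero] at this
  linarith

lemma mul_enorm_sub_sq_le_of_l0_prox {n : ℕ} {μ β : ℝ} (hμ : 0 ≤ μ) {x y : Fin n → ℝ}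
    (hx : ∀ x', μ * (l0 x : ℝ) + β / 2 * _root_.enorm (x - y) ^ 2
      ≤ μ * (l0 x' : ℝ) + β / 2 * _root_.enorm (x' - y) ^ 2) :
    β * _root_.enorm (x - y) ^ 2 ≤ 2 * (μ * n) := by
  have hy : μ * (l0 y : ℝ) ≤ μ * n := mul_le_mul_of_nonneg_left (by exact_mod_cast l0_le y) hμ
  have hx0 : 0 ≤ μ * (l0 x : ℝ) := mul_nonneg hμ (Nat.cast_nonneg _)
  linarith [mul_enorm_sub_sq_le_of_prox (φ := fun v => μ * (l0 v : ℝ)) hx]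

lemma le_add_mul_of_succ_le {F : ℕ → ℝ} {c : ℝ} (h : ∀ k, F (k + 1) ≤ F k + c) (k : ℕ) :
    F k ≤ F 0 + c * k := by
  induction k with
  | zero => simp
  | succ k ih => push_cast; linarith [h k]

lemma le_add_mul_of_succ_add_le {F e : ℕ → ℝ} {c : ℝ} (hF : ∀ k, 0 ≤ F k) (he : ∀ k, 0 ≤ e k)
    (h : ∀ k, F (k + 1) + e k ≤ F k + c) (k : ℕ) : e k ≤ F 0 + c * (k + 1) := by
  have hF_le := le_add_mul_of_succ_le (F := F) (fun k => by linarith [h k, he k]) k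
  linarith [h k, hF (k + 1)]

lemma cauchySeq_of_mul_dist_sq_le {α : Type*} [PseudoMetricSpace α] {x : ℕ → α} {β : ℕ → ℝ}
    {a b : ℝ} (hβ : ∀ k, 0 < β k) (h : ∀ k : ℕ, β k * dist (x k) (x (k + 1)) ^ 2 ≤ a + b * k)
    (hsum : Summable fun k : ℕ => √(k / β k)) : CauchySeq x := by
  have ha : 0 ≤ a := by simpa using (mul_nonneg (hβ 0).le (sq_nonneg _)).trans (h 0)
  refine cauchySeq_of_summable_dist <| (hsum.mul_left √(a + b)).of_norm_bounded_eventually_nat ?_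
  filter_upwards [eventually_ge_atTop 1] with k hk
  have hk : (1 : ℝ) ≤ k := by exact_mod_cast hk
  have hdist : dist (x k) (x (k + 1)) ^ 2 ≤ (a + b) * (k / β k) := by
    rw [mul_div_assoc', le_div_iff₀ (hβ k)]
    nlinarith [h k]
  rw [Real.norm_of_nonneg dist_nonneg, ← Real.sqrt_mul' _ (div_nonneg (by linarith) (hβ k).le)]
  exact Real.le_sqrt_of_sq_le hdist

lemma cauchySeq_of_residual_bounds {n : ℕ} {x z w : ℕ → Fin n → ℝ} {β : ℕ → ℝ} {a b C : ℝ}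
    (hβ : ∀ k, 0 < β k) (hz : ∀ k, β k * _root_.enorm (z (k + 1) - (x k + w k)) ^ 2 ≤ C)
    (hx : ∀ k : ℕ, β k * _root_.enorm (x (k + 1) - (z (k + 1) - w k)) ^ 2 ≤ a + b * k)
    (hsum : Summable fun k : ℕ => √(k / β k)) : CauchySeq x := by
  refine cauchySeq_of_mul_dist_sq_le (a := 2 * a + 2 * C) (b := 2 * b) hβ (fun k => ?_) hsum
  have hdist : dist (x k) (x (k + 1)) ≤ _root_.enorm (x (k + 1) - x k) := by
    rw [dist_comm]
    exact dist_le_enorm_sub _ _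
  have hsplit := enorm_sub_sq_le (x (k + 1)) (z (k + 1) - w k) (x k)
  rw [show z (k + 1) - w k - x k = z (k + 1) - (x k + w k) by abel] at hsplit
  have hβk := (hβ k).le
  calc β k * dist (x k) (x (k + 1)) ^ 2 ≤ β k * _root_.enorm (x (k + 1) - x k) ^ 2 := by
        gcongr
    _ ≤ β k * (2 * _root_.enorm (x (k + 1) - (z (k + 1) - w k)) ^ 2
          + 2 * _root_.enorm (z (k + 1) - (x k + w k)) ^ 2) := by gcongr
    _ ≤ 2 * a + 2 * C + 2 * b * k := by linarith [hx k, hz k]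

end ADMM

theorem anisotropic_ADMM_gradient_cauchy_general (M N : ℕ) (A : Matrix (Fin M) (Fin N) ℝ)
    (Dh Dv : Matrix (Fin N) (Fin N) ℝ) (g : Fin M → ℝ) (μ : ℝ) (hμ : 0 < μ)
    (t s u lt ls : ℕ → Fin N → ℝ) (βt βs : ℕ → ℝ)
    (hβt : ∀ k, 0 < βt k) (hβs : ∀ k, 0 < βs k)
    -- (i): t^{k+1} minimizes the anisotropic ℓ⁰ subproblem
    (ht : ∀ k, ∀ t' : Fin N → ℝ,
      μ * (l0 (t (k + 1)) : ℝ)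
          + βt k / 2 * _root_.enorm (t (k + 1) - (Dh.mulVec (u k) + (βt k)⁻¹ • lt k)) ^ 2
        ≤ μ * (l0 t' : ℝ)
          + βt k / 2 * _root_.enorm (t' - (Dh.mulVec (u k) + (βt k)⁻¹ • lt k)) ^ 2)
    -- (ii): s^{k+1} minimizes the anisotropic ℓ⁰ subproblem
    (hs : ∀ k, ∀ s' : Fin N → ℝ,
      μ * (l0 (s (k + 1)) : ℝ)
          + βs k / 2 * _root_.enorm (s (k + 1) - (Dv.mulVec (u k) + (βs k)⁻¹ • ls k)) ^ 2
        ≤ μ * (l0 s' : ℝ)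
          + βs k / 2 * _root_.enorm (s' - (Dv.mulVec (u k) + (βs k)⁻¹ • ls k)) ^ 2)
    -- (iii): u^{k+1} minimizes the quadratic subproblem
    (hu : ∀ k, ∀ v : Fin N → ℝ,
      1 / 2 * _root_.enorm (A.mulVec (u (k + 1)) - g) ^ 2
          + βt k / 2 * _root_.enorm (Dh.mulVec (u (k + 1)) - (t (k + 1) - (βt k)⁻¹ • lt k)) ^ 2
          + βs k / 2 * _root_.enorm (Dv.mulVec (u (k + 1)) - (s (k + 1) - (βs k)⁻¹ • ls k)) ^ 2
        ≤ 1 / 2 * _root_.enorm (A.mulVec v - g) ^ 2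
          + βt k / 2 * _root_.enorm (Dh.mulVec v - (t (k + 1) - (βt k)⁻¹ • lt k)) ^ 2
          + βs k / 2 * _root_.enorm (Dv.mulVec v - (s (k + 1) - (βs k)⁻¹ • ls k)) ^ 2)
    (hsumt : Summable fun k : ℕ => Real.sqrt ((k : ℝ) / βt k))
    (hsums : Summable fun k : ℕ => Real.sqrt ((k : ℝ) / βs k)) :
    (CauchySeq fun k => Dh.mulVec (u k)) ∧
    (∃ tstar : Fin N → ℝ, Tendsto (fun k => Dh.mulVec (u k)) atTop (𝓝 tstar)) ∧
    (CauchySeq fun k => Dv.mulVec (u k)) ∧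
    (∃ sstar : Fin N → ℝ, Tendsto (fun k => Dv.mulVec (u k)) atTop (𝓝 sstar)) := by
  set F := fun k => _root_.enorm (A.mulVec (u k) - g) ^ 2
  set ρt := fun k => _root_.enorm (Dh.mulVec (u (k + 1)) - (t (k + 1) - (βt k)⁻¹ • lt k)) ^ 2
  set ρs := fun k => _root_.enorm (Dv.mulVec (u (k + 1)) - (s (k + 1) - (βs k)⁻¹ • ls k)) ^ 2
  have hproxt k := ADMM.mul_enorm_sub_sq_le_of_l0_prox hμ.le (ht k)
  have hproxs k := ADMM.mul_enorm_sub_sq_le_of_l0_prox hμ.le (hs k)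
  have henergy k : F (k + 1) + (βt k * ρt k + βs k * ρs k) ≤ F k + 4 * (μ * N) := by
    have h := hu k (u k)
    rw [ADMM.enorm_sub_sub_comm (Dh *ᵥ u k), ADMM.enorm_sub_sub_comm (Dv *ᵥ u k)] at h
    simp only [F, ρt, ρs]
    linarith [hproxt k, hproxs k]
  have hρt k : 0 ≤ βt k * ρt k := mul_nonneg (hβt k).le (sq_nonneg _)
  have hρs k : 0 ≤ βs k * ρs k := mul_nonneg (hβs k).le (sq_nonneg _)
  have hgrowth := ADMM.le_add_mul_of_succ_add_le (F := F) (fun k => sq_nonneg _)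
    (fun k => add_nonneg (hρt k) (hρs k)) henergy
  have hDh : CauchySeq fun k => Dh.mulVec (u k) :=
    ADMM.cauchySeq_of_residual_bounds hβt hproxt (fun k =>
      show βt k * ρt k ≤ F 0 + 4 * (μ * N) + 4 * (μ * N) * k by linarith [hgrowth k, hρs k]) hsumt
  have hDv : CauchySeq fun k => Dv.mulVec (u k) :=
    ADMM.cauchySeq_of_residual_bounds hβs hproxs (fun k =>
      show βs k * ρs k ≤ F 0 + 4 * (μ * N) + 4 * (μ * N) * k by linarith [hgrowth k, hρt k]) hsums
  exact ⟨hDh, cauchySeq_tendsto_of_complete hDh, hDv, cauchySeq_tendsto_of_complete hDv⟩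

/-- under the growth conditions, the gradient sequences
(D_h u^k) and (D_v u^k) are Cauchy, hence convergent. -/
theorem anisotropic_ADMM_gradient_cauchy (M N : ℕ) (A : Matrix (Fin M) (Fin N) ℝ)
    (Dh Dv : Matrix (Fin N) (Fin N) ℝ) (g : Fin M → ℝ) (μ : ℝ) (hμ : 0 < μ)
    (t s u lt ls : ℕ → Fin N → ℝ) (βt βs : ℕ → ℝ)
    (hβt : ∀ k, 0 < βt k) (hβs : ∀ k, 0 < βs k)
    -- (i): t^{k+1} minimizes the anisotropic ℓ⁰ subproblem
    (ht : ∀ k, ∀ t' : Fin N → ℝ,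
      μ * (l0 (t (k + 1)) : ℝ)
          + βt k / 2 * _root_.enorm (t (k + 1) - (Dh.mulVec (u k) + (βt k)⁻¹ • lt k)) ^ 2
        ≤ μ * (l0 t' : ℝ)
          + βt k / 2 * _root_.enorm (t' - (Dh.mulVec (u k) + (βt k)⁻¹ • lt k)) ^ 2)
    -- (ii): s^{k+1} minimizes the anisotropic ℓ⁰ subproblem
    (hs : ∀ k, ∀ s' : Fin N → ℝ,
      μ * (l0 (s (k + 1)) : ℝ)
          + βs k / 2 * _root_.enorm (s (k + 1) - (Dv.mulVec (u k) + (βs k)⁻¹ • ls k)) ^ 2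
        ≤ μ * (l0 s' : ℝ)
          + βs k / 2 * _root_.enorm (s' - (Dv.mulVec (u k) + (βs k)⁻¹ • ls k)) ^ 2)
    -- (iii): u^{k+1} minimizes the quadratic subproblem
    (hu : ∀ k, ∀ v : Fin N → ℝ,
      1 / 2 * _root_.enorm (A.mulVec (u (k + 1)) - g) ^ 2
          + βt k / 2 * _root_.enorm (Dh.mulVec (u (k + 1)) - (t (k + 1) - (βt k)⁻¹ • lt k)) ^ 2
          + βs k / 2 * _root_.enorm (Dv.mulVec (u (k + 1)) - (s (k + 1) - (βs k)⁻¹ • ls k)) ^ 2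
        ≤ 1 / 2 * _root_.enorm (A.mulVec v - g) ^ 2
          + βt k / 2 * _root_.enorm (Dh.mulVec v - (t (k + 1) - (βt k)⁻¹ • lt k)) ^ 2
          + βs k / 2 * _root_.enorm (Dv.mulVec v - (s (k + 1) - (βs k)⁻¹ • ls k)) ^ 2)
    -- (iv): dual updates
    (hlt : ∀ k, lt (k + 1) = lt k - βt k • (t (k + 1) - Dh.mulVec (u (k + 1))))
    (hls : ∀ k, ls (k + 1) = ls k - βs k • (s (k + 1) - Dv.mulVec (u (k + 1))))
    (hmonot : Monotone βt) (hmonos : Monotone βs)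
    (hsumt : Summable fun k : ℕ => Real.sqrt ((k : ℝ) / βt k))
    (hsums : Summable fun k : ℕ => Real.sqrt ((k : ℝ) / βs k)) :
    (CauchySeq fun k => Dh.mulVec (u k)) ∧
    (∃ tstar : Fin N → ℝ, Tendsto (fun k => Dh.mulVec (u k)) atTop (𝓝 tstar)) ∧
    (CauchySeq fun k => Dv.mulVec (u k)) ∧
    (∃ sstar : Fin N → ℝ, Tendsto (fun k => Dv.mulVec (u k)) atTop (𝓝 sstar)) :=
  anisotropic_ADMM_gradient_cauchy_general M N A Dh Dv g μ hμ t s u lt ls βt βs hβt hβs ht hs hu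
    hsumt hsums
end

section
/- Let δ > 0 and f ∈ ℝ. A real number t* is a global minimizer over ℝ of the function t ↦ δ·|t|₀ + (t − f)², where |t|₀ = 0 if t = 0 and |t|₀ = 1 otherwise, if and only if either (t* = 0 and f² ≤ δ) or (t* = f and δ ≤ f²). -/
open Matrix Filter Topology

/-- characterization of the 1D hard-thresholding operator
(proximal map of the one-dimensional ℓ⁰ penalty). -/
theorem hard_threshold_1D (δ f : ℝ) (hδ : 0 < δ) (tstar : ℝ) :
    (∀ t : ℝ,
      δ * (if tstar = 0 then (0 : ℝ) else 1) + (tstar - f) ^ 2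
        ≤ δ * (if t = 0 then (0 : ℝ) else 1) + (t - f) ^ 2) ↔
    ((tstar = 0 ∧ f ^ 2 ≤ δ) ∨ (tstar = f ∧ δ ≤ f ^ 2)) := by
  constructor
  · intro h
    by_cases hts : tstar = 0
    · left
      refine ⟨hts, ?_⟩
      have hf := h f
      subst hts
      by_cases hf0 : f = 0
      · subst hf0; nlinarith
      · simp [hf0] at hf
        nlinarith [hf, sq_nonneg f]
    · right
      have h0 := h 0
      have hf := h f
      simp [hts] at h0 hf
      by_cases hf0 : f = 0
      · exfalso; subst hf0; simp at hf; nlinarith [sq_nonneg tstar]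
      · simp [hf0] at hf
        have heq : tstar = f := by nlinarith [sq_nonneg (tstar - f)]
        exact ⟨heq, by nlinarith [sq_nonneg (tstar - f)]⟩
  · rintro (⟨h0, hle⟩ | ⟨heq, hge⟩) t
    · subst h0
      by_cases ht : t = 0
      · simp [ht]
      · simp [ht]; nlinarith [sq_nonneg (t - f)]
    · subst heq
      by_cases ht : t = 0
      · by_cases hf0 : tstar = 0 <;> simp [ht, hf0] <;> nlinarith
      · by_cases hf0 : tstar = 0 <;> simp [ht, hf0] <;> nlinarith [sq_nonneg (t - tstar)]
end
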